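/- Consider an ABPG sequence with g ≡ 0 (see context) converging to a point x̃ with ∇f(x̃) = 0, and assume f satisfies the KL inequality at x̃ with exponent θ ∈ (0, 1/2]: there exist c > 0, ε > 0, η > 0 such that |f(x) − f(x̃)|^θ ≤ c(1 − θ)‖∇f(x)‖ for all x with ‖x − x̃‖ < ε and f(x̃) < f(x) < f(x̃) + η. Then the sequence converges linearly: there exist c₁ > 0 and q ∈ [0, 1) such that ‖x^k − x̃‖ ≤ c₁·q^k for all k. -/

import Mathlib

open scoped RealInnerProductSpace NNReal

/-- Hessian–vector product `∇²φ(x) d`. -/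
noncomputable def hessApply {n : ℕ} (φ : EuclideanSpace ℝ (Fin n) → ℝ)
    (x d : EuclideanSpace ℝ (Fin n)) : EuclideanSpace ℝ (Fin n) :=
  fderiv ℝ (gradient φ) x d

/-!
Strong convexity of `φ` gives `⟪∇²φ(x) d, d⟫ ≥ σ ‖d‖²`, so the line search yields the sufficient
decrease `r (k + 1) ≤ r k - a ‖d k‖²` for `r k = f (x k) - f x̃ ≥ 0`. The optimality condition bounds
`‖∇f (x k)‖` by a multiple of `‖d k‖`; since eventually `r k ≤ 1` and `2θ ≤ 1`, the KL inequality
then gives `r k ≤ (r k) ^ (2θ) ≤ b ‖d k‖²`. Hence `r (k + 1) ≤ (1 - a / b) r k`, so `r k` and with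
it `‖d k‖²` decay geometrically, and the steps `‖x (k + 1) - x k‖ ≤ ‖d k‖` have a geometric tail.
-/

open Set Filter Topology Asymptotics

section Smooth

variable {E : Type*} [NormedAddCommGroup E] [InnerProductSpace ℝ E] [CompleteSpace E]

theorem ContDiff.gradient {f : E → ℝ} {m n : WithTop ℕ∞} (hf : ContDiff ℝ n f)
    (hmn : m + 1 ≤ n) : ContDiff ℝ m (gradient f) :=
  (InnerProductSpace.toDual ℝ E).symm.contDiff.comp (hf.fderiv_right hmn)

theorem StrongConvexOn.mul_norm_sq_le_inner_fderiv_gradient {φ : E → ℝ} {σ : ℝ} {x : E}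
    (hφsc : StrongConvexOn univ σ φ) (hφ : Differentiable ℝ φ)
    (hx : DifferentiableAt ℝ (gradient φ) x) (d : E) :
    σ * ‖d‖ ^ 2 ≤ ⟪fderiv ℝ (gradient φ) x d, d⟫ := by
  set g : ℝ → ℝ := fun s => φ (x + s • d) - σ / 2 * ‖x + s • d‖ ^ 2
  set G : ℝ → ℝ := fun s => ⟪gradient φ (x + s • d), d⟫ - σ * ⟪x + s • d, d⟫
  have hline : ∀ s : ℝ, HasDerivAt (fun s : ℝ => x + s • d) d s := fun s => by
    simpa using ((hasDerivAt_id s).smul_const d).const_add x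
  have hg : ∀ s, HasDerivAt g (G s) s := fun s => by
    have hφs := (hasGradientAt_iff_hasFDerivAt.mp (hφ _).hasGradientAt).comp_hasDerivAt s
      (hline s)
    exact (hφs.sub (((hline s).norm_sq).const_mul (σ / 2))).congr_deriv (by
      simp only [G, InnerProductSpace.toDual_apply_apply]; ring)
  have hg_convex : ConvexOn ℝ univ g := by
    have := ((strongConvexOn_iff_convex.mp hφsc).translate_right x).comp_linearMap
      (LinearMap.toSpanSingleton ℝ E d)
    simpa [g, Function.comp_def] using this
  have hG_mono : Monotone G := by
    have hderiv : deriv g = G := funext fun s => (hg s).deriv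
    simpa [monotoneOn_univ, hderiv] using
      hg_convex.monotoneOn_deriv fun s _ => (hg s).differentiableAt
  have hG0 : HasDerivAt G (⟪fderiv ℝ (gradient φ) x d, d⟫ - σ * ‖d‖ ^ 2) 0 := by
    have hx0 : HasFDerivAt (gradient φ) (fderiv ℝ (gradient φ) x) (x + (0 : ℝ) • d) := by
      simpa using hx.hasFDerivAt
    have h := (hx0.comp_hasDerivAt (0 : ℝ) (hline 0)).inner ℝ (hasDerivAt_const (0 : ℝ) d)
    have h' := h.sub (((hline 0).inner ℝ (hasDerivAt_const (0 : ℝ) d)).const_mul σ)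
    exact h'.congr_deriv (by simp)
  linarith [hG0.nonneg_of_monotone hG_mono]

end Smooth

theorem exists_forall_le_mul_pow_of_eventually_le_mul {r : ℕ → ℝ} {q : ℝ} (hq : 0 < q)
    (hr : ∀ k, 0 ≤ r k) (h : ∀ᶠ k in atTop, r (k + 1) ≤ q * r k) :
    ∃ R, ∀ k, r k ≤ R * q ^ k := by
  obtain ⟨N, hN⟩ := eventually_atTop.mp h
  have hO : r =O[atTop] (q ^ ·) := by
    refine IsBigO.of_bound (r N / q ^ N) (eventually_atTop.mpr ⟨N, fun k hk => ?_⟩)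
    obtain ⟨m, rfl⟩ := Nat.exists_eq_add_of_le hk
    have hgeom := le_geom (u := fun j => r (N + j)) hq.le m fun j _ => hN (N + j) (by omega)
    rw [Real.norm_of_nonneg (hr _), Real.norm_of_nonneg (by positivity), pow_add]
    calc r (N + m) ≤ q ^ m * r (N + 0) := hgeom
      _ = r N / q ^ N * (q ^ N * q ^ m) := by field_simp; ring_nf
  obtain ⟨R, hR⟩ := (isBigO_nat_atTop_iff fun k hk => absurd hk (pow_ne_zero k hq.ne')).mp hO
  refine ⟨R, fun k => ?_⟩
  simpa [abs_of_nonneg (hr k), abs_of_pos hq] using hR k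

theorem exists_forall_le_mul_pow_of_le_sub_of_eventually_le {r e : ℕ → ℝ} {a b : ℝ}
    (ha : 0 < a) (hb : 0 < b) (hr : ∀ k, 0 ≤ r k) (hdec : ∀ k, r (k + 1) ≤ r k - a * e k)
    (hbound : ∀ᶠ k in atTop, r k ≤ b * e k) :
    ∃ q, 0 < q ∧ q < 1 ∧ ∃ R, ∀ k, r k ≤ R * q ^ k := by
  set q := max (1 - a / b) (1 / 2)
  have hq1 : q < 1 := max_lt (by linarith [div_pos ha hb]) (by norm_num)
  refine ⟨q, by positivity, hq1,
    exists_forall_le_mul_pow_of_eventually_le_mul (by positivity) hr ?_⟩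
  filter_upwards [hbound] with k hk
  calc r (k + 1) ≤ r k - a * e k := hdec k
    _ ≤ r k - a / b * r k := by
        have he : r k / b ≤ e k := by rw [div_le_iff₀ hb]; linarith
        rw [div_mul_eq_mul_div, mul_div_assoc]
        linarith [mul_le_mul_of_nonneg_left he ha.le]
    _ = (1 - a / b) * r k := by ring
    _ ≤ q * r k := mul_le_mul_of_nonneg_right (le_max_left _ _) (hr k)

theorem exists_norm_sub_le_mul_pow_of_norm_sub_sq_le {E : Type*} [NormedAddCommGroup E]
    {x : ℕ → E} {x₀ : E} (hx : Tendsto x atTop (𝓝 x₀)) {q R : ℝ} (hq0 : 0 ≤ q) (hq1 : q < 1)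
    (h : ∀ k, ‖x (k + 1) - x k‖ ^ 2 ≤ R * q ^ k) :
    ∃ c₁ : ℝ, 0 < c₁ ∧ ∃ s : ℝ, 0 ≤ s ∧ s < 1 ∧ ∀ k, ‖x k - x₀‖ ≤ c₁ * s ^ k := by
  set s := √q
  have hs1 : s < 1 := by simpa using Real.sqrt_lt_sqrt hq0 hq1
  have hR : 0 ≤ R := by simpa using (sq_nonneg _).trans (h 0)
  have hstep : ∀ k, dist (x k) (x (k + 1)) ≤ √R * s ^ k := fun k => by
    rw [dist_comm, dist_eq_norm, ← pow_le_pow_iff_left₀ (norm_nonneg _) (by positivity) two_ne_zero,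
      mul_pow, ← pow_mul, mul_comm k, pow_mul, Real.sq_sqrt hR, Real.sq_sqrt hq0]
    exact h k
  refine ⟨√R / (1 - s) + 1, by positivity, s, Real.sqrt_nonneg q, hs1, fun k => ?_⟩
  calc ‖x k - x₀‖ = dist (x k) x₀ := (dist_eq_norm _ _).symm
    _ ≤ √R * s ^ k / (1 - s) := dist_le_of_le_geometric_of_tendsto s _ hs1 hstep hx k
    _ ≤ (√R / (1 - s) + 1) * s ^ k := by
        rw [mul_div_right_comm, add_mul, one_mul]
        exact le_add_of_nonneg_right (by positivity)

theorem le_sq_of_rpow_le {r y θ : ℝ} (hr0 : 0 ≤ r) (hr1 : r ≤ 1) (hθ0 : 0 ≤ θ) (hθ : θ ≤ 1 / 2)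
    (h : r ^ θ ≤ y) : r ≤ y ^ 2 :=
  calc r = r ^ (1 : ℝ) := (Real.rpow_one r).symm
    _ ≤ r ^ (θ * 2) := Real.rpow_le_rpow_of_exponent_ge' hr0 hr1 (by positivity) (by linarith)
    _ = (r ^ θ) ^ 2 := by rw [Real.rpow_mul hr0]; norm_cast
    _ ≤ y ^ 2 := pow_le_pow_left₀ (Real.rpow_nonneg hr0 θ) h 2

theorem eventually_sub_le_sq_of_rpow_le {E : Type*} [NormedAddCommGroup E] {f g : E → ℝ}
    {x : ℕ → E} {x₀ : E} {θ ε η : ℝ} (hx : Tendsto x atTop (𝓝 x₀))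
    (hfx : Tendsto (fun k => f (x k)) atTop (𝓝 (f x₀))) (hge : ∀ k, f x₀ ≤ f (x k))
    (hθ0 : 0 ≤ θ) (hθ : θ ≤ 1 / 2) (hε : 0 < ε) (hη : 0 < η)
    (hKL : ∀ y, ‖y - x₀‖ < ε → f x₀ < f y → f y < f x₀ + η → |f y - f x₀| ^ θ ≤ g y) :
    ∀ᶠ k in atTop, f (x k) - f x₀ ≤ g (x k) ^ 2 := by
  have hr : Tendsto (fun k => f (x k) - f x₀) atTop (𝓝 0) := by
    simpa using hfx.sub_const (f x₀)
  filter_upwards [(tendsto_iff_norm_sub_tendsto_zero.mp hx).eventually (gt_mem_nhds hε),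
    hr.eventually (gt_mem_nhds hη), hr.eventually (ge_mem_nhds one_pos)] with k hxk hfk hr1
  rcases (sub_nonneg.mpr (hge k)).eq_or_lt with h0 | hpos
  · rw [← h0]; positivity
  · refine le_sq_of_rpow_le hpos.le hr1 hθ0 hθ ?_
    simpa [abs_of_pos hpos] using hKL _ hxk (sub_pos.mp hpos) (by linarith)

theorem norm_sub_le_of_eq_add_smul {E : Type*} [NormedAddCommGroup E] [NormedSpace ℝ E]
    {x d : ℕ → E} {t : ℕ → ℝ} (ht : ∀ k, t k ∈ Icc 0 1)
    (hupd : ∀ k, x (k + 1) = x k + t k • d k) (k : ℕ) : ‖x (k + 1) - x k‖ ≤ ‖d k‖ := by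
  rw [hupd, add_sub_cancel_left, norm_smul, Real.norm_of_nonneg (ht k).1]
  exact mul_le_of_le_one_left (norm_nonneg _) (ht k).2

section ABPG

variable {E : Type*} [NormedAddCommGroup E] [InnerProductSpace ℝ E] [CompleteSpace E]
  {φ f : E → ℝ} {lam : ℝ} {x d : ℕ → E}

theorem abpg_sufficient_decrease {σ α tmin : ℝ} {t : ℕ → ℝ} (hφ : ContDiff ℝ 2 φ)
    (hφsc : StrongConvexOn univ σ φ) (hσ : 0 ≤ σ) (hlam : 0 < lam) (hα : 0 ≤ α)
    (htmin : 0 ≤ tmin) (ht : ∀ k, tmin ≤ t k)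
    (hdec : ∀ k, f (x (k + 1)) ≤
      f (x k) - α * t k / (2 * lam) * ⟪fderiv ℝ (gradient φ) (x k) (d k), d k⟫) (k : ℕ) :
    f (x (k + 1)) ≤ f (x k) - α * tmin * σ / (2 * lam) * ‖d k‖ ^ 2 := by
  have hH := hφsc.mul_norm_sq_le_inner_fderiv_gradient (hφ.differentiable (by norm_num))
    ((hφ.gradient (by norm_num)).differentiable one_ne_zero (x k)) (d k)
  have htk : 0 ≤ t k := htmin.trans (ht k)
  have : α * tmin * σ / (2 * lam) * ‖d k‖ ^ 2 ≤
      α * t k / (2 * lam) * ⟪fderiv ℝ (gradient φ) (x k) (d k), d k⟫ :=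
    calc α * tmin * σ / (2 * lam) * ‖d k‖ ^ 2 = α * tmin / (2 * lam) * (σ * ‖d k‖ ^ 2) := by ring
      _ ≤ α * t k / (2 * lam) * (σ * ‖d k‖ ^ 2) := by gcongr; exact ht k
      _ ≤ α * t k / (2 * lam) * ⟪fderiv ℝ (gradient φ) (x k) (d k), d k⟫ := by gcongr
  linarith [hdec k]

theorem abpg_exists_norm_gradient_le {x₀ : E} (hφ : ContDiff ℝ 2 φ) (hlam : 0 < lam)
    (hopt : ∀ k, gradient f (x k) + (1 / lam) • fderiv ℝ (gradient φ) (x k) (d k) = 0)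
    (hx : Tendsto x atTop (𝓝 x₀)) : ∃ M > 0, ∀ k, ‖gradient f (x k)‖ ≤ M * ‖d k‖ := by
  have hH : Continuous fun y => ‖fderiv ℝ (gradient φ) y‖ :=
    ((hφ.gradient (by norm_num)).continuous_fderiv one_ne_zero).norm
  obtain ⟨B, hB⟩ := ((hH.tendsto x₀).comp hx).bddAbove_range
  refine ⟨max B 1 / lam, by positivity, fun k => ?_⟩
  rw [eq_neg_of_add_eq_zero_left (hopt k), norm_neg, norm_smul, Real.norm_of_nonneg (by positivity)]
  calc 1 / lam * ‖fderiv ℝ (gradient φ) (x k) (d k)‖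
      ≤ 1 / lam * (‖fderiv ℝ (gradient φ) (x k)‖ * ‖d k‖) := by
        gcongr; exact ContinuousLinearMap.le_opNorm _ _
    _ ≤ 1 / lam * (max B 1 * ‖d k‖) := by
        gcongr; exact (hB ⟨k, rfl⟩).trans (le_max_left _ _)
    _ = max B 1 / lam * ‖d k‖ := by ring

end ABPG

theorem abpg_linear_rate_KL_exponent_le_half_general {n : ℕ}
    (φ f : EuclideanSpace ℝ (Fin n) → ℝ) (σ : ℝ) (hσ : 0 < σ)
    (hφ : ContDiff ℝ 2 φ)
    (hφsc : ConvexOn ℝ Set.univ (fun y => φ y - σ / 2 * ‖y‖ ^ 2))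
    (hf : ContDiff ℝ 1 f)
    (lam : ℝ) (hlam : 0 < lam) (α : ℝ) (hα : α ∈ Set.Ioo (0 : ℝ) 1)
    (tmin : ℝ) (htmin : tmin ∈ Set.Ioc (0 : ℝ) 1)
    (x d : ℕ → EuclideanSpace ℝ (Fin n)) (t : ℕ → ℝ)
    (ht : ∀ k, t k ∈ Set.Icc tmin 1)
    (hopt : ∀ k, gradient f (x k) + (1 / lam) • hessApply φ (x k) (d k) = 0)
    (hupd : ∀ k, x (k + 1) = x k + t k • d k)
    (hdec : ∀ k, f (x (k + 1)) ≤
      f (x k) - α * t k / (2 * lam) * ⟪hessApply φ (x k) (d k), d k⟫)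
    (xtilde : EuclideanSpace ℝ (Fin n))
    (hconv : Filter.Tendsto x Filter.atTop (nhds xtilde))
    (θ : ℝ) (hθ : θ ∈ Set.Ioc (0 : ℝ) (1 / 2))
    (c ε η : ℝ) (hc : 0 < c) (hε : 0 < ε) (hη : 0 < η)
    (hKL : ∀ y : EuclideanSpace ℝ (Fin n), ‖y - xtilde‖ < ε →
      f xtilde < f y → f y < f xtilde + η →
        |f y - f xtilde| ^ θ ≤ c * (1 - θ) * ‖gradient f y‖) :
    ∃ c₁ : ℝ, 0 < c₁ ∧ ∃ q : ℝ, 0 ≤ q ∧ q < 1 ∧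
      ∀ k : ℕ, ‖x k - xtilde‖ ≤ c₁ * q ^ k := by
  obtain ⟨hα0, -⟩ := hα
  obtain ⟨htmin0, -⟩ := htmin
  obtain ⟨hθ0, hθ⟩ := hθ
  set a := α * tmin * σ / (2 * lam)
  have ha : 0 < a := by positivity
  set r : ℕ → ℝ := fun k => f (x k) - f xtilde
  have hsuff := abpg_sufficient_decrease hφ (strongConvexOn_iff_convex.mpr hφsc) hσ.le hlam
    hα0.le htmin0.le (fun k => (ht k).1) hdec
  have hdesc : ∀ k, r (k + 1) ≤ r k - a * ‖d k‖ ^ 2 := fun k => by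
    simp only [r]; linarith [hsuff k]
  have hfx : Tendsto (fun k => f (x k)) atTop (𝓝 (f xtilde)) :=
    (hf.continuous.tendsto xtilde).comp hconv
  have hanti : Antitone fun k => f (x k) :=
    antitone_nat_of_succ_le fun k => (hsuff k).trans (sub_le_self _ (by positivity))
  have hge : ∀ k, f xtilde ≤ f (x k) := hanti.le_of_tendsto hfx
  obtain ⟨M, hM, hgrad⟩ := abpg_exists_norm_gradient_le hφ hlam hopt hconv
  have hκ : 0 < c * (1 - θ) := mul_pos hc (by linarith)
  have hbound : ∀ᶠ k in atTop, r k ≤ (c * (1 - θ) * M) ^ 2 * ‖d k‖ ^ 2 := by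
    filter_upwards [eventually_sub_le_sq_of_rpow_le hconv hfx hge hθ0.le hθ hε hη hKL] with k hk
    calc r k ≤ (c * (1 - θ) * ‖gradient f (x k)‖) ^ 2 := hk
      _ ≤ (c * (1 - θ) * (M * ‖d k‖)) ^ 2 := pow_le_pow_left₀
          (mul_nonneg hκ.le (norm_nonneg _)) (mul_le_mul_of_nonneg_left (hgrad k) hκ.le) 2
      _ = (c * (1 - θ) * M) ^ 2 * ‖d k‖ ^ 2 := by ring
  obtain ⟨q, hq0, hq1, R, hR⟩ := exists_forall_le_mul_pow_of_le_sub_of_eventually_le ha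
    (pow_pos (mul_pos hκ hM) 2) (fun k => sub_nonneg.mpr (hge k)) hdesc hbound
  refine exists_norm_sub_le_mul_pow_of_norm_sub_sq_le hconv hq0.le hq1 (R := R / a) fun k => ?_
  calc ‖x (k + 1) - x k‖ ^ 2 ≤ ‖d k‖ ^ 2 := by
        gcongr
        exact norm_sub_le_of_eq_add_smul (fun k => Icc_subset_Icc_left htmin0.le (ht k)) hupd k
    _ ≤ r k / a := by rw [le_div_iff₀ ha]; linarith [hdesc k, sub_nonneg.mpr (hge (k + 1))]
    _ ≤ R / a * q ^ k := by rw [div_mul_eq_mul_div]; gcongr; exact hR k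

theorem abpg_linear_rate_KL_exponent_le_half {n : ℕ}
    (φ f : EuclideanSpace ℝ (Fin n) → ℝ) (σ : ℝ) (hσ : 0 < σ)
    (hφ : ContDiff ℝ 2 φ)
    (hφsc : ConvexOn ℝ Set.univ (fun y => φ y - σ / 2 * ‖y‖ ^ 2))
    (hf : ContDiff ℝ 1 f)
    (hbdd : BddBelow (Set.range f))
    (hlevel : ∀ r : ℝ, Bornology.IsBounded {y | f y ≤ r})
    (hlip : ∀ s : Set (EuclideanSpace ℝ (Fin n)), Bornology.IsBounded s →
      ∃ K : ℝ≥0, LipschitzOnWith K (gradient f) s)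
    (lam : ℝ) (hlam : 0 < lam) (α : ℝ) (hα : α ∈ Set.Ioo (0 : ℝ) 1)
    (tmin : ℝ) (htmin : tmin ∈ Set.Ioc (0 : ℝ) 1)
    (x d : ℕ → EuclideanSpace ℝ (Fin n)) (t : ℕ → ℝ)
    (ht : ∀ k, t k ∈ Set.Icc tmin 1)
    (hopt : ∀ k, gradient f (x k) + (1 / lam) • hessApply φ (x k) (d k) = 0)
    (hupd : ∀ k, x (k + 1) = x k + t k • d k)
    (hdec : ∀ k, f (x (k + 1)) ≤
      f (x k) - α * t k / (2 * lam) * ⟪hessApply φ (x k) (d k), d k⟫)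
    (xtilde : EuclideanSpace ℝ (Fin n))
    (hconv : Filter.Tendsto x Filter.atTop (nhds xtilde))
    (hstat : gradient f xtilde = 0)
    (θ : ℝ) (hθ : θ ∈ Set.Ioc (0 : ℝ) (1 / 2))
    (c ε η : ℝ) (hc : 0 < c) (hε : 0 < ε) (hη : 0 < η)
    (hKL : ∀ y : EuclideanSpace ℝ (Fin n), ‖y - xtilde‖ < ε →
      f xtilde < f y → f y < f xtilde + η →
        |f y - f xtilde| ^ θ ≤ c * (1 - θ) * ‖gradient f y‖) :
    ∃ c₁ : ℝ, 0 < c₁ ∧ ∃ q : ℝ, 0 ≤ q ∧ q < 1 ∧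
      ∀ k : ℕ, ‖x k - xtilde‖ ≤ c₁ * q ^ k :=
  abpg_linear_rate_KL_exponent_le_half_general φ f σ hσ hφ hφsc hf lam hlam α hα tmin htmin x d t ht
    hopt hupd hdec xtilde hconv θ hθ c ε η hc hε hη hKL
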